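/- Let φ: ℝ → ℝ be a continuous function supported on [0, ε] with ∫ φ = 1 and ∑_{k∈ℤ} |φ̂(k)| < ∞, and let μ be a Borel probability measure on ℝ with μ([ε,1]) = 1. Then 1/2 ≤ ∑_{k=1}^∞ |φ̂(k)| |μ̂(k)|. -/

import Mathlib

open MeasureTheory Real

noncomputable def fourierTransform (μ : Measure ℝ) (ξ : ℝ) : ℂ :=
  ∫ x, Complex.exp ((-2 * Real.pi * ξ * x : ℝ) * Complex.I) ∂μ

/-- auxiliary exponential -/
noncomputable def Efun (ξ x : ℝ) : ℂ :=
  Complex.exp (((2 * Real.pi * ξ * x : ℝ) : ℂ) * Complex.I)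

lemma Efun_abs (ξ x : ℝ) : ‖Efun ξ x‖ = 1 :=
  Complex.norm_exp_ofReal_mul_I _

lemma Efun_cont (ξ : ℝ) : Continuous (fun x => Efun ξ x) := by
  unfold Efun
  exact Complex.continuous_exp.comp
    ((Complex.continuous_ofReal.comp (by continuity)).mul continuous_const)

lemma Efun_conj (ξ x : ℝ) : (starRingEnd ℂ) (Efun ξ x) = Efun (-ξ) x := by
  unfold Efun
  rw [← Complex.exp_conj]
  congr 1
  rw [map_mul, Complex.conj_ofReal, Complex.conj_I]
  push_cast
  ring

lemma Efun_zero (x : ℝ) : Efun 0 x = 1 := by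
  unfold Efun
  norm_num

lemma FT_neg (μ : Measure ℝ) (ξ : ℝ) : fourierTransform μ (-ξ) = ∫ x, Efun ξ x ∂μ := by
  unfold fourierTransform Efun
  congr 1
  funext x
  congr 2
  push_cast
  ring

lemma FT_conj (μ : Measure ℝ) (ξ : ℝ) :
    fourierTransform μ (-ξ) = (starRingEnd ℂ) (fourierTransform μ ξ) := by
  have h : fourierTransform μ ξ = ∫ x, Efun (-ξ) x ∂μ := by
    rw [← FT_neg μ (-ξ), neg_neg]
  rw [FT_neg, h, ← integral_conj]
  congr 1
  funext x
  rw [Efun_conj, neg_neg]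

lemma FT_abs (μ : Measure ℝ) (ξ : ℝ) :
    ‖fourierTransform μ (-ξ)‖ = ‖fourierTransform μ ξ‖ := by
  rw [FT_conj, Complex.norm_conj]

lemma FT_le (μ : Measure ℝ) [IsProbabilityMeasure μ] (ξ : ℝ) :
    ‖fourierTransform μ ξ‖ ≤ 1 := by
  unfold fourierTransform
  calc ‖∫ x, Complex.exp (((-2 * Real.pi * ξ * x : ℝ) : ℂ) * Complex.I) ∂μ‖
      ≤ ∫ x, ‖Complex.exp (((-2 * Real.pi * ξ * x : ℝ) : ℂ) * Complex.I)‖ ∂μ :=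
        norm_integral_le_integral_norm _
    _ = ∫ (_ : ℝ), (1:ℝ) ∂μ := by
        congr 1; funext x
        rw [Complex.norm_exp_ofReal_mul_I]
    _ = 1 := by simp

lemma FT_zero (μ : Measure ℝ) [IsProbabilityMeasure μ] : fourierTransform μ 0 = 1 := by
  have h : fourierTransform μ (-0 : ℝ) = ∫ x, Efun 0 x ∂μ := FT_neg μ 0
  rw [neg_zero] at h
  rw [h]
  simp_rw [Efun_zero]
  simp

theorem stmt_4 (ε : ℝ) (hε : ε ∈ Set.Ioc (0:ℝ) 1)
    (φ : ℝ → ℝ) (hcont : Continuous φ)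
    (hsupp : Function.support φ ⊆ Set.Icc 0 ε)
    (hint : ∫ x, φ x = 1)
    (φhat : ℤ → ℂ)
    (hφhat : φhat = fun (k : ℤ) =>
      ∫ x, Complex.exp ((-2 * Real.pi * (k:ℝ) * x : ℝ) * Complex.I) * (φ x : ℂ))
    (hsum : Summable (fun k : ℤ => ‖φhat k‖))
    (μ : Measure ℝ) [IsProbabilityMeasure μ] (hμ : μ (Set.Icc ε 1) = 1) :
    (1:ℝ) / 2 ≤ ∑' k : ℕ, ‖φhat (k + 1)‖ * ‖fourierTransform μ (k + 1)‖ := by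
  obtain ⟨hε0, hε1⟩ := hε
  haveI : Fact (0 < (1:ℝ)) := ⟨one_pos⟩
  -- φ vanishes outside (0, ε)
  have hout : ∀ x : ℝ, x ∉ Set.Icc 0 ε → φ x = 0 := by
    intro x hx
    by_contra h
    exact hx (hsupp h)
  have hφε : φ ε = 0 := by
    have h1 : Filter.Tendsto φ (nhdsWithin ε (Set.Ioi ε)) (nhds (φ ε)) :=
      (hcont.tendsto ε).mono_left nhdsWithin_le_nhds
    have h2 : Filter.Tendsto φ (nhdsWithin ε (Set.Ioi ε)) (nhds 0) := by
      apply Filter.Tendsto.congr' _ tendsto_const_nhds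
      filter_upwards [self_mem_nhdsWithin] with x hx
      exact (hout x (fun h => absurd h.2 (not_le.mpr hx))).symm
    exact tendsto_nhds_unique h1 h2
  have hφ0 : φ 0 = 0 := by
    have h1 : Filter.Tendsto φ (nhdsWithin 0 (Set.Iio 0)) (nhds (φ 0)) :=
      (hcont.tendsto 0).mono_left nhdsWithin_le_nhds
    have h2 : Filter.Tendsto φ (nhdsWithin 0 (Set.Iio 0)) (nhds 0) := by
      apply Filter.Tendsto.congr' _ tendsto_const_nhds
      filter_upwards [self_mem_nhdsWithin] with x hx
      exact (hout x (fun h => absurd h.1 (not_le.mpr hx))).symm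
    exact tendsto_nhds_unique h1 h2
  have hge : ∀ x : ℝ, ε ≤ x → φ x = 0 := by
    intro x hx
    rcases eq_or_lt_of_le hx with h | h
    · rw [← h]; exact hφε
    · exact hout x (fun hh => absurd hh.2 (not_le.mpr h))
  have hle : ∀ x : ℝ, x ≤ 0 → φ x = 0 := by
    intro x hx
    rcases eq_or_lt_of_le hx with h | h
    · rw [h]; exact hφ0
    · exact hout x (fun hh => absurd hh.1 (not_le.mpr h))
  have hφ1 : φ 1 = 0 := hge 1 hε1
  have hφhatE : ∀ k : ℤ, φhat k = ∫ x, Efun (-(k:ℝ)) x * (φ x : ℂ) := by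
    intro k
    rw [hφhat]
    simp only
    congr 1
    funext x
    unfold Efun
    congr 2
    push_cast
    ring
  -- conjugation symmetry of φhat
  have hφabs : ∀ k : ℤ, ‖φhat (-k)‖ = ‖φhat k‖ := by
    intro k
    have h : φhat (-k) = (starRingEnd ℂ) (φhat k) := by
      rw [hφhatE, hφhatE, ← integral_conj]
      congr 1
      funext x
      rw [map_mul, Efun_conj, Complex.conj_ofReal]
      congr 2
      push_cast
      ring
    rw [h, Complex.norm_conj]
  -- the periodic function
  have hψcont : Continuous (fun x : ℝ => (φ x : ℂ)) := Complex.continuous_ofReal.comp hcont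
  have hψ01 : ((φ 0 : ℂ)) = ((φ (0 + 1) : ℂ)) := by norm_num [hφ0, hφ1]
  set f : C(AddCircle (1:ℝ), ℂ) :=
    ⟨AddCircle.liftIco 1 0 (fun x : ℝ => (φ x : ℂ)),
      AddCircle.liftIco_continuous hψ01 hψcont.continuousOn⟩ with hfd
  have hfco : ∀ y : AddCircle (1:ℝ),
      f y = AddCircle.liftIco (1:ℝ) 0 (fun x : ℝ => (φ x : ℂ)) y := fun y => rfl
  have hfval : ∀ x : ℝ, x ∈ Set.Icc (0:ℝ) 1 → f ((x : ℝ) : AddCircle (1:ℝ)) = (φ x : ℂ) := by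
    intro x hx
    rcases eq_or_lt_of_le hx.2 with h | h
    · have h1 : ((x : ℝ) : AddCircle (1:ℝ)) = ((0 : ℝ) : AddCircle (1:ℝ)) := by
        rw [h]
        simp [AddCircle.coe_period]
      have hm : (0:ℝ) ∈ Set.Ico (0:ℝ) (0 + 1) := by
        rw [Set.mem_Ico, zero_add]
        norm_num
      rw [hfco, h1, AddCircle.liftIco_coe_apply hm, h]
      norm_num [hφ0, hφ1]
    · have hm : x ∈ Set.Ico (0:ℝ) (0 + 1) := by
        rw [Set.mem_Ico, zero_add]
        exact ⟨hx.1, h⟩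
      rw [hfco]
      exact AddCircle.liftIco_coe_apply hm
  -- Fourier coefficients of f are φhat
  have hfourE : ∀ (k : ℤ) (x : ℝ), fourier k ((x : ℝ) : AddCircle (1:ℝ)) = Efun k x := by
    intro k x
    rw [fourier_coe_apply]
    unfold Efun
    congr 1
    push_cast
    ring
  have hcoeff : ∀ n : ℤ, fourierCoeff (⇑f) n = φhat n := by
    intro n
    rw [fourierCoeff_eq_intervalIntegral (⇑f) n 0, hφhatE]
    have h1 : ∫ x in (0:ℝ)..(0+1), fourier (-n) ((x:ℝ) : AddCircle (1:ℝ)) • f x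
        = ∫ x in (0:ℝ)..1, Efun (-(n:ℝ)) x * (φ x : ℂ) := by
      rw [zero_add]
      apply intervalIntegral.integral_congr
      intro x hx
      rw [Set.uIcc_of_le (by norm_num : (0:ℝ) ≤ 1)] at hx
      simp only [smul_eq_mul]
      rw [hfourE, hfval x hx]
      congr 2
      push_cast
      ring
    rw [h1]
    have h2 : (∫ x, Efun (-(n:ℝ)) x * (φ x : ℂ))
        = ∫ x in Set.Ioc (0:ℝ) 1, Efun (-(n:ℝ)) x * (φ x : ℂ) := by
      symm
      apply setIntegral_eq_integral_of_forall_compl_eq_zero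
      intro x hx
      simp only [Set.mem_Ioc, not_and_or, not_lt, not_le] at hx
      have hz : φ x = 0 := by
        rcases hx with h | h
        · exact hle x h
        · exact hge x (le_trans hε1 h.le)
      rw [hz]
      simp
    rw [h2, ← intervalIntegral.integral_of_le (by norm_num : (0:ℝ) ≤ 1)]
    norm_num
  -- summability of Fourier coefficients
  have hsumC : Summable (fourierCoeff (⇑f)) := by
    apply Summable.of_norm
    apply hsum.congr
    intro k
    rw [hcoeff]
  -- pointwise convergence
  have hpt : ∀ x : ℝ, HasSum (fun k : ℤ => φhat k * Efun k x) (f ((x : ℝ) : AddCircle (1:ℝ))) := by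
    intro x
    have h := has_pointwise_sum_fourier_series_of_summable hsumC ((x : ℝ) : AddCircle (1:ℝ))
    apply h.congr_fun
    intro k
    rw [hcoeff, hfourE, smul_eq_mul]
  -- the key sum c
  set c : ℤ → ℂ := fun k => φhat k * fourierTransform μ (-(k : ℝ)) with hc
  have hcabs : ∀ k : ℤ,
      ‖c k‖ = ‖φhat k‖ * ‖fourierTransform μ (k:ℝ)‖ := by
    intro k
    rw [hc]
    simp only
    rw [norm_mul, FT_abs]
  have hcnorm : Summable fun k : ℤ => ‖c k‖ := by
    apply Summable.of_nonneg_of_le (fun k => norm_nonneg _) _ hsum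
    intro k
    rw [hcabs]
    calc ‖φhat k‖ * ‖fourierTransform μ (k:ℝ)‖
        ≤ ‖φhat k‖ * 1 :=
          mul_le_mul_of_nonneg_left (FT_le μ _) (norm_nonneg _)
      _ = ‖φhat k‖ := mul_one _
  have hsumc : Summable c := Summable.of_norm hcnorm
  -- the integral identity: ∑ c = 0
  have hae : ∀ᵐ x ∂μ, x ∈ Set.Icc ε 1 := by
    have hμc : μ (Set.Icc ε 1)ᶜ = 0 := by
      rw [measure_compl measurableSet_Icc (measure_ne_top μ _), hμ]
      simp
    rw [MeasureTheory.ae_iff]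
    exact hμc
  have hswap : ∫ x, (∑' k : ℤ, φhat k * Efun k x) ∂μ = ∑' k : ℤ, c k := by
    rw [MeasureTheory.integral_tsum]
    · congr 1
      funext k
      rw [MeasureTheory.integral_const_mul, hc]
      simp only
      rw [FT_neg]
    · intro k
      exact (continuous_const.mul (Efun_cont k)).aestronglyMeasurable
    · have h1 : ∀ k : ℤ, ∫⁻ x, ‖φhat k * Efun k x‖₊ ∂μ = ‖φhat k‖₊ := by
        intro k
        have h2 : ∀ x : ℝ, (‖φhat k * Efun k x‖₊ : ENNReal) = ‖φhat k‖₊ := by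
          intro x
          rw [nnnorm_mul]
          have h3 : ‖Efun (k:ℝ) x‖₊ = 1 := by
            ext
            rw [coe_nnnorm, Efun_abs]
            simp
          rw [h3, mul_one]
        simp_rw [h2]
        simp
      simp_rw [enorm_eq_nnnorm, h1]
      rw [ENNReal.tsum_coe_ne_top_iff_summable]
      apply NNReal.summable_coe.mp
      apply hsum.congr
      intro k
      rw [coe_nnnorm]
  have hzero : ∑' k : ℤ, c k = 0 := by
    rw [← hswap]
    apply integral_eq_zero_of_ae
    filter_upwards [hae] with x hx
    have h1 : (∑' k : ℤ, φhat k * Efun k x) = f ((x : ℝ) : AddCircle (1:ℝ)) := (hpt x).tsum_eq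
    have h2 : f x = (φ x : ℂ) := hfval x ⟨le_trans hε0.le hx.1, hx.2⟩
    rw [h1, h2, hge x hx.1]
    simp
  -- c 0 = 1
  have hφhat0 : φhat 0 = 1 := by
    rw [hφhatE]
    have h1 : ∀ x : ℝ, Efun (-((0:ℤ):ℝ)) x * (φ x : ℂ) = ((φ x : ℝ) : ℂ) := by
      intro x
      norm_num [Efun_zero]
    simp_rw [h1]
    have hIO : (∫ x : ℝ, ((φ x : ℝ) : ℂ)) = (((∫ x : ℝ, φ x) : ℝ) : ℂ) := integral_ofReal
    rw [hIO, hint]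
    simp
  have hc0 : c 0 = 1 := by
    rw [hc]
    simp only [Int.cast_zero, neg_zero]
    rw [FT_zero, hφhat0, mul_one]
  -- splitting the sum
  have hinj1 : Function.Injective (fun n : ℕ => (n : ℤ)) := fun a b h => by
    simp only [Nat.cast_inj] at h; exact h
  have hinj2 : Function.Injective (fun n : ℕ => -((n : ℤ) + 1)) := fun a b h => by
    simp only [neg_inj, add_left_inj, Nat.cast_inj] at h; exact h
  have hinj3 : Function.Injective (fun n : ℕ => (n : ℤ) + 1) := fun a b h => by
    simp only [add_left_inj, Nat.cast_inj] at h; exact h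
  have hs0 : Summable fun n : ℕ => c n := hsumc.comp_injective hinj1
  have hs2 : Summable fun n : ℕ => c (-((n:ℤ) + 1)) := hsumc.comp_injective hinj2
  have hsplit : (∑' n : ℕ, c n) + ∑' n : ℕ, c (-((n:ℤ) + 1)) = 0 := by
    rw [← tsum_of_nat_of_neg_add_one hs0 hs2]
    exact hzero
  have hsplit2 : (∑' n : ℕ, c ((n:ℤ) + 1)) + ∑' n : ℕ, c (-((n:ℤ) + 1)) = -1 := by
    have h1 : (∑' n : ℕ, c n) = c 0 + ∑' n : ℕ, c ((n:ℤ) + 1) := by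
      rw [Summable.tsum_eq_zero_add hs0]
      congr 1
    rw [h1, hc0] at hsplit
    linear_combination hsplit
  -- conclude
  have hnorm1 : Summable fun n : ℕ => ‖c ((n:ℤ) + 1)‖ := hcnorm.comp_injective hinj3
  have hnorm2 : Summable fun n : ℕ => ‖c (-((n:ℤ) + 1))‖ := hcnorm.comp_injective hinj2
  set S : ℝ := ∑' k : ℕ, ‖φhat (k + 1)‖ * ‖fourierTransform μ (k + 1)‖
    with hS
  have hSeq1 : (∑' n : ℕ, ‖c ((n:ℤ) + 1)‖) = S := by
    rw [hS]
    apply tsum_congr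
    intro n
    rw [hcabs]
    have harg : ((((n:ℤ) + 1) : ℤ) : ℝ) = ((n:ℝ) + 1) := by push_cast; ring
    rw [harg]
  have hSeq2 : (∑' n : ℕ, ‖c (-((n:ℤ) + 1))‖) = S := by
    rw [hS]
    apply tsum_congr
    intro n
    rw [hcabs, hφabs]
    have harg : (((-((n:ℤ) + 1)) : ℤ) : ℝ) = -((n:ℝ) + 1) := by push_cast; ring
    rw [harg, FT_abs]
  have hT1 : ‖∑' n : ℕ, c ((n:ℤ) + 1)‖ ≤ S := hSeq1 ▸ norm_tsum_le_tsum_norm hnorm1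
  have hT2 : ‖∑' n : ℕ, c (-((n:ℤ) + 1))‖ ≤ S := hSeq2 ▸ norm_tsum_le_tsum_norm hnorm2
  have h1 : (1:ℝ) = ‖(∑' n : ℕ, c ((n:ℤ) + 1)) + ∑' n : ℕ, c (-((n:ℤ) + 1))‖ := by
    rw [hsplit2]
    simp
  have h2 : (1:ℝ) ≤ S + S := by
    rw [h1]
    exact le_trans (norm_add_le _ _) (add_le_add hT1 hT2)
  linarith
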